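/- Let ℓ : Br₃ → ℤ be the word-length homomorphism with ℓ(σ₁) = ℓ(σ₂) = 1, and let q : Br₃ → ℤ/5ℤ be its reduction mod 5. Then q is surjective and its kernel is the subgroup of Br₃ generated by the two elements σ₁·u⁻¹ and σ₂·u⁻¹, where u = (σ₁σ₂)³. In particular this subgroup has index 5 in Br₃. -/

import Mathlib

/-- The braid relation σ₁σ₂σ₁ = σ₂σ₁σ₂ as a relator in the free group on two generators. -/
def braidRels : Set (FreeGroup (Fin 2)) :=
  {FreeGroup.of 0 * FreeGroup.of 1 * FreeGroup.of 0 *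
    (FreeGroup.of 1 * FreeGroup.of 0 * FreeGroup.of 1)⁻¹}

/-- The braid group on three strands, presented as ⟨σ₁, σ₂ | σ₁σ₂σ₁ = σ₂σ₁σ₂⟩. -/
abbrev Br3 : Type := PresentedGroup braidRels

/-- The first standard generator σ₁ of Br₃. -/
def σ₁ : Br3 := PresentedGroup.of 0

/-- The second standard generator σ₂ of Br₃. -/
def σ₂ : Br3 := PresentedGroup.of 1

/-!
The full twist `u = (σ₁σ₂)³ = Δ²`, with `Δ = σ₁σ₂σ₁`, is central because conjugation by `Δ`
swaps `σ₁` and `σ₂`. Writing `σᵢ = (σᵢu⁻¹)·u` shows that `H = ⟨σ₁u⁻¹, σ₂u⁻¹⟩` together with the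
central cyclic group `⟨u⟩` generates `Br₃`, so every element is `h·uⁿ` with `h ∈ H`. Since
`ℓ(σᵢu⁻¹) = -5`, `H` lies in the kernel of `ℓ mod 5`, and as `ℓ(u) = 6 ≡ 1` the element `h·uⁿ` lies
in it iff `5 ∣ n`. Finally `u⁵ ∈ H`, because `((σ₁u⁻¹)(σ₂u⁻¹))³ = (σ₁σ₂)³u⁻⁶ = u⁻⁵`.
-/

namespace Subgroup

variable {G : Type*} [Group G]

theorem normal_of_le_center {H : Subgroup G} (h : H ≤ center G) : H.Normal :=
  ⟨fun n hn g => by rw [mem_center_iff.mp (h hn) g, mul_inv_cancel_right]; exact hn⟩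

theorem closure_image_mul_inv_sup_zpowers {S : Set G} (hS : closure S = ⊤) (z : G) :
    closure ((· * z⁻¹) '' S) ⊔ zpowers z = ⊤ := by
  rw [eq_top_iff, ← hS, closure_le]
  intro s hs
  simpa using mul_mem_sup (subset_closure (Set.mem_image_of_mem (· * z⁻¹) hs)) (mem_zpowers z)

theorem ker_le_of_sup_zpowers_eq_top {M : Type*} [Group M] {q : G →* M} {H : Subgroup G} {z : G}
    (hz : z ∈ center G) (htop : H ⊔ zpowers z = ⊤) (hH : H ≤ q.ker)
    (hzH : ∀ n : ℤ, q z ^ n = 1 → z ^ n ∈ H) : q.ker ≤ H := by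
  have := normal_of_le_center ((zpowers_le (H := center G)).mpr hz)
  intro g hg
  obtain ⟨h, hh, _, ⟨n, rfl⟩, rfl⟩ := mem_sup_of_normal_right.mp (htop ▸ mem_top g)
  rw [MonoidHom.mem_ker, map_mul, hH hh, one_mul, map_zpow] at hg
  exact mul_mem hh (hzH n hg)

end Subgroup

namespace Br3

theorem closure_σ₁_σ₂_eq_top : Subgroup.closure {σ₁, σ₂} = ⊤ := by
  rw [← PresentedGroup.closure_range_of braidRels]
  congr 1
  ext x
  simp [Fin.exists_fin_two, σ₁, σ₂, eq_comm]

theorem braid_rel : σ₁ * σ₂ * σ₁ = σ₂ * σ₁ * σ₂ :=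
  mul_inv_eq_one.mp (PresentedGroup.one_of_mem (Set.mem_singleton _))

theorem fullTwist_mem_center : (σ₁ * σ₂) ^ 3 ∈ Subgroup.center Br3 := by
  have hσ₁ : SemiconjBy (σ₁ * σ₂ * σ₁) σ₁ σ₂ := by
    rw [SemiconjBy]; conv_lhs => rw [braid_rel]
    group
  have hσ₂ : SemiconjBy (σ₁ * σ₂ * σ₁) σ₂ σ₁ := by
    rw [SemiconjBy]; conv_rhs => rw [braid_rel]
    group
  have hsq : (σ₁ * σ₂) ^ 3 = (σ₁ * σ₂ * σ₁) * (σ₁ * σ₂ * σ₁) := by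
    conv_rhs => arg 2; rw [braid_rel]
    simp only [pow_succ, pow_zero, one_mul, mul_assoc]
  have hle : Subgroup.closure {σ₁, σ₂} ≤ Subgroup.centralizer {(σ₁ * σ₂) ^ 3} := by
    rw [Subgroup.closure_le]
    rintro _ (rfl | rfl) <;> rw [SetLike.mem_coe, Subgroup.mem_centralizer_singleton_iff, hsq]
    exacts [(hσ₂.mul_left hσ₁).symm, (hσ₁.mul_left hσ₂).symm]
  rw [closure_σ₁_σ₂_eq_top] at hle
  exact Subgroup.mem_center_iff.mpr fun g =>
    Subgroup.mem_centralizer_singleton_iff.mp (hle (Subgroup.mem_top g))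

section lengthHom

variable {M : Type*} [Group M] (m : M)

/-- `lengthHom m g = m ^ ℓ g`, where `ℓ` is the word length (exponent sum) on `Br₃`. -/
def lengthHom : Br3 →* M :=
  PresentedGroup.toGroup (rels := braidRels) (f := fun _ => m) <| by
    rintro r rfl
    simp

@[simp]
theorem lengthHom_σ₁ : lengthHom m σ₁ = m := PresentedGroup.toGroup.of _

@[simp]
theorem lengthHom_σ₂ : lengthHom m σ₂ = m := PresentedGroup.toGroup.of _

theorem range_lengthHom : (lengthHom m).range = Subgroup.zpowers m := by
  rw [MonoidHom.range_eq_map, ← closure_σ₁_σ₂_eq_top, MonoidHom.map_closure, Set.image_pair,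
    lengthHom_σ₁, lengthHom_σ₂, Set.pair_eq_singleton, Subgroup.zpowers_eq_closure]

theorem lengthHom_fullTwist : lengthHom m ((σ₁ * σ₂) ^ 3) = m ^ 6 := by
  rw [map_pow, map_mul, lengthHom_σ₁, lengthHom_σ₂, ← sq, ← pow_mul]

end lengthHom

theorem fullTwist_pow_five :
    ((σ₁ * σ₂) ^ 3) ^ 5 = ((σ₁ * ((σ₁ * σ₂) ^ 3)⁻¹ * (σ₂ * ((σ₁ * σ₂) ^ 3)⁻¹)) ^ 3)⁻¹ := by
  have hc : ∀ g, Commute g ((σ₁ * σ₂) ^ 3)⁻¹ := fun g =>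
    Commute.inv_right (Subgroup.mem_center_iff.mp fullTwist_mem_center g)
  have hprod : σ₁ * ((σ₁ * σ₂) ^ 3)⁻¹ * (σ₂ * ((σ₁ * σ₂) ^ 3)⁻¹) =
      σ₁ * σ₂ * (((σ₁ * σ₂) ^ 3)⁻¹ * ((σ₁ * σ₂) ^ 3)⁻¹) := by
    rw [mul_assoc σ₁, ← mul_assoc _ σ₂, ← (hc σ₂).eq]
    group
  rw [hprod, ((hc (σ₁ * σ₂)).mul_right (hc (σ₁ * σ₂))).mul_pow]
  group

theorem ker_lengthHom_eq_closure {M : Type*} [Group M] {m : M} (hm : orderOf m = 5) :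
    (lengthHom m).ker = Subgroup.closure {σ₁ * ((σ₁ * σ₂) ^ 3)⁻¹, σ₂ * ((σ₁ * σ₂) ^ 3)⁻¹} := by
  have hm5 : m ^ 5 = 1 := hm ▸ pow_orderOf_eq_one m
  have hz : lengthHom m ((σ₁ * σ₂) ^ 3) = m := by
    rw [lengthHom_fullTwist, pow_succ, hm5, one_mul]
  have hle :
      Subgroup.closure {σ₁ * ((σ₁ * σ₂) ^ 3)⁻¹, σ₂ * ((σ₁ * σ₂) ^ 3)⁻¹} ≤ (lengthHom m).ker := by
    rw [Subgroup.closure_le]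
    rintro _ (rfl | rfl) <;> simp [hz]
  refine le_antisymm ?_ hle
  have htop := Subgroup.closure_image_mul_inv_sup_zpowers closure_σ₁_σ₂_eq_top ((σ₁ * σ₂) ^ 3)
  rw [Set.image_pair] at htop
  refine Subgroup.ker_le_of_sup_zpowers_eq_top fullTwist_mem_center htop hle ?_
  intro n hn
  rw [hz, ← orderOf_dvd_iff_zpow_eq_one, hm] at hn
  obtain ⟨k, rfl⟩ := hn
  rw [zpow_mul, zpow_natCast, fullTwist_pow_five]
  exact zpow_mem (inv_mem (pow_mem (mul_mem (Subgroup.subset_closure (.inl rfl))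
    (Subgroup.subset_closure (.inr rfl))) 3)) k

end Br3

theorem stmt_12 :
    ∃ q : Br3 →* Multiplicative (ZMod 5),
      q σ₁ = Multiplicative.ofAdd 1 ∧ q σ₂ = Multiplicative.ofAdd 1 ∧
      Function.Surjective q ∧
      q.ker = Subgroup.closure {σ₁ * ((σ₁ * σ₂) ^ 3)⁻¹, σ₂ * ((σ₁ * σ₂) ^ 3)⁻¹} ∧
      (Subgroup.closure {σ₁ * ((σ₁ * σ₂) ^ 3)⁻¹, σ₂ * ((σ₁ * σ₂) ^ 3)⁻¹} : Subgroup Br3).index = 5 := by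
  have horder : orderOf (Multiplicative.ofAdd (1 : ZMod 5)) = 5 := by
    rw [orderOf_ofAdd_eq_addOrderOf, ZMod.addOrderOf_one]
  have hker := Br3.ker_lengthHom_eq_closure horder
  refine ⟨Br3.lengthHom _, Br3.lengthHom_σ₁ _, Br3.lengthHom_σ₂ _, ?_, hker, ?_⟩
  · have : Fact (Nat.Prime 5) := ⟨Nat.prime_five⟩
    rw [← MonoidHom.range_eq_top, Br3.range_lengthHom]
    exact zpowers_eq_top_of_prime_card (p := 5) (by simp) fun h => by simp [h] at horder
  · rw [← hker, Subgroup.index_ker, Br3.range_lengthHom, Nat.card_zpowers, horder]
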